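/- Let X and Y be nonempty finite T₀-spaces. The non-Hausdorff join X ⊕ Y is contractible (homotopy equivalent, as a topological space, to a one-point space) if and only if X is contractible or Y is contractible. -/

import Mathlib

/-!
A finite T₀-space is identified with a finite poset, topologized with the down-set
(Alexandrov) topology. The non-Hausdorff join is the ordered sum `X ⊕ₗ Y` (every point of
X below every point of Y), again with the down-set topology.

A finite poset is contractible iff the identity is joined to a constant map by a fence of
pointwise comparable monotone self-maps: comparable maps are homotopic, and conversely each time
slice of a homotopy is locally (in time) below the nearby slices. Removing a beat point is a
retraction comparable to the identity, so it preserves this property, while without beat points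
the identity is comparable to no other map; hence a fence-contractible poset with at least two
points has a beat point. A beat point of `X ⊕ₗ Y` is a beat point of `X` or of `Y`, unless `X`
has a maximum or `Y` a minimum (and then that factor is a cone); removing beat points one at a
time therefore shrinks the join until one of the factors is seen to be contractible.
-/

noncomputable section

/-- The Alexandrov "down-set" topology on a poset: open sets are the lower sets. Under the
correspondence between finite `T₀`-spaces and finite posets, this is the topology whose
specialization order is the given order (`U_x = {y : y ≤ x}` is the minimal open set of `x`). -/
def downTop (X : Type*) [Preorder X] : TopologicalSpace X := Topology.lowerSet X

open Relation Topology

theorem Monotone.symmGen {α β : Type*} [Preorder α] [Preorder β] {φ : α → β}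
    (hφ : Monotone φ) {a b : α} (h : SymmGen (· ≤ ·) a b) :
    SymmGen (· ≤ ·) (φ a) (φ b) :=
  h.imp (fun h => hφ h) (fun h => hφ h)

theorem Monotone.eqvGen {α β : Type*} [Preorder α] [Preorder β] {φ : α → β}
    (hφ : Monotone φ) {a b : α} (h : EqvGen (· ≤ ·) a b) :
    EqvGen (· ≤ ·) (φ a) (φ b) := by
  induction h with
  | rel _ _ h => exact .rel _ _ (hφ h)
  | refl => exact .refl _
  | symm _ _ _ ih => exact .symm _ _ ih
  | trans _ _ _ _ _ ih₁ ih₂ => exact .trans _ _ _ ih₁ ih₂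

def FenceContractible (P : Type*) [Preorder P] : Prop :=
  ∃ c : P, EqvGen (· ≤ ·) (OrderHom.id : P →o P) (OrderHom.const P c)

section Fences

variable {P Q : Type*} [Preorder P] [Preorder Q]

theorem IsTop.fenceContractible {c : P} (hc : IsTop c) : FenceContractible P :=
  ⟨c, .rel _ _ fun x => hc x⟩

theorem IsBot.fenceContractible {c : P} (hc : IsBot c) : FenceContractible P :=
  ⟨c, .symm _ _ (.rel _ _ fun x => hc x)⟩

structure IsComparableRetraction (i : Q →o P) (r : P →o Q) : Prop where
  retract : r.comp i = OrderHom.id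
  symmGen : SymmGen (· ≤ ·) (i.comp r) OrderHom.id

theorem IsComparableRetraction.fenceContractible_iff {i : Q →o P} {r : P →o Q}
    (h : IsComparableRetraction i r) : FenceContractible P ↔ FenceContractible Q := by
  constructor
  · rintro ⟨c, hc⟩
    have hφ : Monotone fun f : P →o P => (r.comp f).comp i :=
      fun f g hfg x => r.monotone (hfg (i x))
    refine ⟨r c, ?_⟩
    have := hφ.eqvGen hc
    rwa [OrderHom.comp_id, h.retract] at this
  · rintro ⟨c, hc⟩
    have hφ : Monotone fun f : Q →o Q => (i.comp f).comp r :=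
      fun f g hfg x => i.monotone (hfg (r x))
    have hir := EqvGen.symmGen_le_eqvGen _ _ _ h.symmGen
    exact ⟨i c, .trans _ _ _ (.symm _ _ hir) (hφ.eqvGen hc)⟩

end Fences

def IsBeatPoint {P : Type*} [Preorder P] (x : P) : Prop :=
  (∃ m, IsGreatest (Set.Iio x) m) ∨ ∃ m, IsLeast (Set.Ioi x) m

section BeatPoints

variable {P : Type*} [PartialOrder P]

theorem IsBeatPoint.exists_retraction {x : P} (hx : IsBeatPoint x) :
    ∃ r : P →o {y // y ≠ x}, IsComparableRetraction (OrderHom.Subtype.val _) r := by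
  obtain ⟨m, hmx, hm, below, above⟩ : ∃ m, m ≠ x ∧ SymmGen (· ≤ ·) m x ∧
      (∀ y < x, y ≤ m) ∧ ∀ y, x < y → m ≤ y := by
    rcases hx with ⟨m, hlt, hub⟩ | ⟨m, hgt, hlb⟩
    · exact ⟨m, hlt.ne, .of_le hlt.le, fun y hy => hub hy, fun y hy => (hlt.trans hy).le⟩
    · exact ⟨m, hgt.ne', .of_ge hgt.le, fun y hy => (hy.trans hgt).le, fun y hy => hlb hy⟩
  classical
  let r : P →o {y // y ≠ x} :=
    { toFun y := if h : y = x then ⟨m, hmx⟩ else ⟨y, h⟩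
      monotone' a b hab := by
        dsimp only
        split_ifs with ha hb hb
        · exact le_rfl
        · exact above b (lt_of_le_of_ne (ha ▸ hab) (Ne.symm hb))
        · exact below a (lt_of_le_of_ne (hb ▸ hab) ha)
        · exact hab }
  refine ⟨r, OrderHom.ext _ _ (funext fun y => dif_neg y.2),
    hm.imp (fun hm y => ?_) (fun hm y => ?_)⟩
  · change ((if h : y = x then ⟨m, hmx⟩ else ⟨y, h⟩ : {y // y ≠ x}) : P) ≤ y
    split_ifs with hy
    exacts [hy ▸ hm, le_rfl]
  · change y ≤ ((if h : y = x then ⟨m, hmx⟩ else ⟨y, h⟩ : {y // y ≠ x}) : P)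
    split_ifs with hy
    exacts [hy ▸ hm, le_rfl]

theorem OrderHom.eq_id_of_le_id [Finite P] (hP : ∀ x : P, ¬∃ m, IsGreatest (Set.Iio x) m)
    {f : P →o P} (hf : f ≤ OrderHom.id) : f = OrderHom.id := by
  ext x
  induction x using WellFoundedLT.induction with
  | _ x ih =>
    refine (hf x).eq_of_not_lt fun hlt => hP x ⟨f x, hlt, fun y hy => ?_⟩
    calc y = f y := (ih y hy).symm
      _ ≤ f x := f.monotone hy.le

theorem OrderHom.eq_id_of_id_le [Finite P] (hP : ∀ x : P, ¬∃ m, IsLeast (Set.Ioi x) m)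
    {f : P →o P} (hf : OrderHom.id ≤ f) : f = OrderHom.id :=
  OrderHom.dual.injective (eq_id_of_le_id (P := Pᵒᵈ) hP hf)

theorem FenceContractible.subsingleton [Finite P] (hP : ∀ x : P, ¬IsBeatPoint x)
    (h : FenceContractible P) : Subsingleton P := by
  obtain ⟨c, hc⟩ := h
  have hid (f g : P →o P) (hfg : EqvGen (· ≤ ·) f g) :
      f = OrderHom.id ↔ g = OrderHom.id := by
    induction hfg with
    | rel f g hfg =>
      constructor
      · rintro rfl; exact OrderHom.eq_id_of_id_le (fun x hx => hP x (.inr hx)) hfg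
      · rintro rfl; exact OrderHom.eq_id_of_le_id (fun x hx => hP x (.inl hx)) hfg
    | refl => rfl
    | symm _ _ _ ih => exact ih.symm
    | trans _ _ _ _ _ ih₁ ih₂ => exact ih₁.trans ih₂
  have hconst := (hid _ _ hc).1 rfl
  exact ⟨fun x y => (DFunLike.congr_fun hconst x).symm.trans (DFunLike.congr_fun hconst y)⟩

theorem FenceContractible.exists_isBeatPoint [Finite P] [Nontrivial P] (h : FenceContractible P) :
    ∃ x : P, IsBeatPoint x := by
  by_contra! hP
  exact not_subsingleton P (h.subsingleton hP)

end BeatPoints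

section Join

open Sum

variable {X Y X' Y' : Type*} [Preorder X] [Preorder Y] [Preorder X'] [Preorder Y']

def OrderHom.sumLexMap (f : X →o X') (g : Y →o Y') : X ⊕ₗ Y →o X' ⊕ₗ Y' where
  toFun z := toLex (Sum.map f g (ofLex z))
  monotone' a b hab := by
    rcases a with a | a <;> rcases b with b | b
    · exact Lex.inl_le_inl_iff.2 (f.monotone (Lex.inl_le_inl_iff.1 hab))
    · exact Lex.inl_le_inr _ _
    · exact absurd hab Lex.not_inr_le_inl
    · exact Lex.inr_le_inr_iff.2 (g.monotone (Lex.inr_le_inr_iff.1 hab))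

theorem OrderHom.sumLexMap_id :
    sumLexMap (OrderHom.id : X →o X) (OrderHom.id : Y →o Y) = .id := by
  ext (x | y) <;> rfl

theorem OrderHom.sumLexMap_comp_sumLexMap (f : X' →o X) (g : Y' →o Y) (f' : X →o X')
    (g' : Y →o Y') :
    (sumLexMap f g).comp (sumLexMap f' g') = sumLexMap (f.comp f') (g.comp g') := by
  ext (x | y) <;> rfl

theorem OrderHom.sumLexMap_le_sumLexMap {f f' : X →o X'} {g g' : Y →o Y'} (hf : f ≤ f')
    (hg : g ≤ g') : sumLexMap f g ≤ sumLexMap f' g' := by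
  rintro (x | y)
  · exact Lex.inl_le_inl_iff.2 (hf x)
  · exact Lex.inr_le_inr_iff.2 (hg y)

theorem IsComparableRetraction.sumLexMap_left {i : X' →o X} {r : X →o X'}
    (h : IsComparableRetraction i r) :
    IsComparableRetraction (i.sumLexMap (.id : Y →o Y)) (r.sumLexMap .id) where
  retract := by rw [OrderHom.sumLexMap_comp_sumLexMap, h.retract]; exact OrderHom.sumLexMap_id
  symmGen := by
    rw [OrderHom.sumLexMap_comp_sumLexMap, ← OrderHom.sumLexMap_id]
    exact Monotone.symmGen (fun _ _ h => OrderHom.sumLexMap_le_sumLexMap h le_rfl) h.symmGen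

theorem IsComparableRetraction.sumLexMap_right {i : Y' →o Y} {r : Y →o Y'}
    (h : IsComparableRetraction i r) :
    IsComparableRetraction ((.id : X →o X).sumLexMap i) (OrderHom.id.sumLexMap r) where
  retract := by rw [OrderHom.sumLexMap_comp_sumLexMap, h.retract]; exact OrderHom.sumLexMap_id
  symmGen := by
    rw [OrderHom.sumLexMap_comp_sumLexMap, ← OrderHom.sumLexMap_id]
    exact Monotone.symmGen (fun _ _ h => OrderHom.sumLexMap_le_sumLexMap le_rfl h) h.symmGen

theorem FenceContractible.sumLex_left (h : FenceContractible X) :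
    FenceContractible (X ⊕ₗ Y) := by
  obtain ⟨c, hc⟩ := h
  have hφ : Monotone fun f : X →o X => f.sumLexMap (.id : Y →o Y) :=
    fun _ _ h => OrderHom.sumLexMap_le_sumLexMap h le_rfl
  refine ⟨toLex (inl c),
    .trans _ ((OrderHom.const X c).sumLexMap .id) _ ?_ (.symm _ _ (.rel _ _ ?_))⟩
  · simpa only [OrderHom.sumLexMap_id] using hφ.eqvGen hc
  · rintro (x | y)
    exacts [le_rfl, Lex.inl_le_inr _ _]

theorem FenceContractible.sumLex_right (h : FenceContractible Y) :
    FenceContractible (X ⊕ₗ Y) := by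
  obtain ⟨c, hc⟩ := h
  have hφ : Monotone fun g : Y →o Y => (.id : X →o X).sumLexMap g :=
    fun _ _ h => OrderHom.sumLexMap_le_sumLexMap le_rfl h
  refine ⟨toLex (inr c),
    .trans _ (OrderHom.id.sumLexMap (OrderHom.const Y c)) _ ?_ (.rel _ _ ?_)⟩
  · simpa only [OrderHom.sumLexMap_id] using hφ.eqvGen hc
  · rintro (x | y)
    exacts [Lex.inl_le_inr _ _, le_rfl]

theorem IsBeatPoint.of_inl {x : X} (hx : IsBeatPoint (toLex (inl x) : X ⊕ₗ Y)) :
    IsBeatPoint x ∨ ∃ m : Y, IsBot m := by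
  rcases hx with ⟨m | m, hlt, hub⟩ | ⟨m | m, hgt, hlb⟩
  · exact .inl (.inl ⟨m, Lex.inl_lt_inl_iff.1 hlt,
      fun y hy => Lex.inl_le_inl_iff.1 (hub (Lex.inl_lt_inl_iff.2 hy))⟩)
  · exact absurd hlt Lex.not_inr_lt_inl
  · exact .inl (.inr ⟨m, Lex.inl_lt_inl_iff.1 hgt,
      fun y hy => Lex.inl_le_inl_iff.1 (hlb (Lex.inl_lt_inl_iff.2 hy))⟩)
  · exact .inr ⟨m, fun y => Lex.inr_le_inr_iff.1 (hlb (Lex.inl_lt_inr x y))⟩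

theorem IsBeatPoint.of_inr {y : Y} (hy : IsBeatPoint (toLex (inr y) : X ⊕ₗ Y)) :
    IsBeatPoint y ∨ ∃ m : X, IsTop m := by
  rcases hy with ⟨m | m, hlt, hub⟩ | ⟨m | m, hgt, hlb⟩
  · exact .inr ⟨m, fun x => Lex.inl_le_inl_iff.1 (hub (Lex.inl_lt_inr x y))⟩
  · exact .inl (.inl ⟨m, Lex.inr_lt_inr_iff.1 hlt,
      fun z hz => Lex.inr_le_inr_iff.1 (hub (Lex.inr_lt_inr_iff.2 hz))⟩)
  · exact absurd hgt Lex.not_inr_lt_inl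
  · exact .inl (.inr ⟨m, Lex.inr_lt_inr_iff.1 hgt,
      fun z hz => Lex.inr_le_inr_iff.1 (hlb (Lex.inr_lt_inr_iff.2 hz))⟩)

end Join

theorem FenceContractible.of_sumLex {X Y : Type*} [PartialOrder X] [PartialOrder Y] [Finite X]
    [Finite Y] [Nonempty X] [Nonempty Y] (h : FenceContractible (X ⊕ₗ Y)) :
    FenceContractible X ∨ FenceContractible Y := by
  induction hn : Nat.card X + Nat.card Y using Nat.strong_induction_on generalizing X Y with
  | _ n ih =>
  have : Nontrivial (X ⊕ₗ Y) :=
    ⟨⟨toLex (.inl (Classical.arbitrary X)), toLex (.inr (Classical.arbitrary Y)), nofun⟩⟩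
  have : Finite (X ⊕ₗ Y) := inferInstanceAs (Finite (X ⊕ Y))
  obtain ⟨x | y, hp⟩ := h.exists_isBeatPoint
  · rcases hp.of_inl with hx | ⟨m, hm⟩
    · obtain ⟨r, hr⟩ := hx.exists_retraction
      have : Nonempty {x' // x' ≠ x} := ⟨r x⟩
      have hlt := Finite.card_subtype_lt (p := (· ≠ x)) (not_not.2 rfl)
      exact (ih _ (by omega) (hr.sumLexMap_left.fenceContractible_iff.1 h) rfl).imp_left
        hr.fenceContractible_iff.2
    · exact .inr hm.fenceContractible
  · rcases hp.of_inr with hy | ⟨m, hm⟩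
    · obtain ⟨r, hr⟩ := hy.exists_retraction
      have : Nonempty {y' // y' ≠ y} := ⟨r y⟩
      have hlt := Finite.card_subtype_lt (p := (· ≠ y)) (not_not.2 rfl)
      exact (ih _ (by omega) (hr.sumLexMap_right.fenceContractible_iff.1 h) rfl).imp_right
        hr.fenceContractible_iff.2
    · exact .inl hm.fenceContractible

section Alexandrov

variable {P Q : Type*} [Preorder P] [TopologicalSpace P] [Topology.IsLowerSet P]
  [Preorder Q] [TopologicalSpace Q] [Topology.IsLowerSet Q]

def orderHomEquivContinuousMap : (P →o Q) ≃ C(P, Q) where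
  toFun f := ⟨f, Topology.IsLowerSet.monotone_iff_continuous.1 f.monotone⟩
  invFun f := ⟨f, Topology.IsLowerSet.monotone_iff_continuous.2 f.continuous⟩

theorem homotopic_of_le {f g : P →o Q} (hfg : f ≤ g) :
    (orderHomEquivContinuousMap f).Homotopic (orderHomEquivContinuousMap g) := by
  have hf := (orderHomEquivContinuousMap f).continuous
  have hg := (orderHomEquivContinuousMap g).continuous
  -- A jump from `f` to `g` at time `1` is continuous: open sets are down-closed and `f ≤ g`.
  refine ⟨⟨⟨fun p => if p.1 = 1 then g p.2 else f p.2, continuous_def.2 fun U hU => ?_⟩,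
    fun x => if_neg zero_ne_one, fun x => if_pos rfl⟩⟩
  have hU' : IsLowerSet U := Topology.IsLowerSet.isOpen_iff_isLowerSet.1 hU
  have : (fun p : unitInterval × P => if p.1 = 1 then g p.2 else f p.2) ⁻¹' U =
      {p | f p.2 ∈ U} ∩ ({p | p.1 ≠ 1} ∪ {p | g p.2 ∈ U}) := by
    ext ⟨t, x⟩
    by_cases ht : t = 1
    · simpa [ht] using fun hgx => hU' (hfg x) hgx
    · simp [ht]
  rw [this]
  exact ((hU.preimage hf).preimage continuous_snd).inter <|
    (isOpen_ne_fun continuous_fst continuous_const).union ((hU.preimage hg).preimage continuous_snd)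

theorem homotopic_of_eqvGen {f g : P →o Q} (hfg : EqvGen (· ≤ ·) f g) :
    (orderHomEquivContinuousMap f).Homotopic (orderHomEquivContinuousMap g) := by
  induction hfg with
  | rel _ _ h => exact homotopic_of_le h
  | refl => exact .refl _
  | symm _ _ _ ih => exact ih.symm
  | trans _ _ _ _ _ ih₁ ih₂ => exact ih₁.trans ih₂

theorem eqvGen_of_homotopic [Finite P] {f g : C(P, Q)} (hfg : f.Homotopic g) :
    EqvGen (· ≤ ·) (orderHomEquivContinuousMap.symm f) (orderHomEquivContinuousMap.symm g) := by
  obtain ⟨H⟩ := hfg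
  let F : unitInterval → (P →o Q) := fun t => orderHomEquivContinuousMap.symm (H.curry t)
  have hloc : ∀ t, ∀ᶠ s in 𝓝 t, F s ≤ F t := by
    intro t
    refine Filter.eventually_all.2 fun x => ?_
    have hIic : IsOpen (Set.Iic (H (t, x))) :=
      Topology.IsLowerSet.isOpen_iff_isLowerSet.2 (isLowerSet_Iic _)
    exact (hIic.preimage (H.continuous.comp (Continuous.prodMk_left x))).mem_nhds le_rfl
  have := PreconnectedSpace.induction₂' (fun s t => EqvGen (· ≤ ·) (F s) (F t))
    (fun t => (hloc t).mono fun s hs => ⟨.symm _ _ (.rel _ _ hs), .rel _ _ hs⟩)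
    ⟨fun _ _ _ => EqvGen.trans _ _ _⟩ 0 1
  convert this using 1 <;> ext x
  exacts [(H.apply_zero x).symm, (H.apply_one x).symm]

theorem contractibleSpace_iff_fenceContractible [Finite P] :
    ContractibleSpace P ↔ FenceContractible P := by
  rw [contractible_iff_id_nullhomotopic]
  constructor
  · rintro ⟨c, hc⟩
    exact ⟨c, eqvGen_of_homotopic hc⟩
  · rintro ⟨c, hc⟩
    exact ⟨c, homotopic_of_eqvGen hc⟩

end Alexandrov

theorem contractibleSpace_downTop_iff (P : Type*) [Preorder P] [Finite P] :
    @ContractibleSpace P (downTop P) ↔ FenceContractible P := by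
  let := downTop P
  have : Topology.IsLowerSet P := ⟨rfl⟩
  exact contractibleSpace_iff_fenceContractible

theorem join_contractible_iff (X Y : Type) [PartialOrder X] [Fintype X]
    [PartialOrder Y] [Fintype Y] [Nonempty X] [Nonempty Y] :
    @ContractibleSpace (X ⊕ₗ Y) (downTop (X ⊕ₗ Y)) ↔
      @ContractibleSpace X (downTop X) ∨ @ContractibleSpace Y (downTop Y) := by
  have : Finite (X ⊕ₗ Y) := inferInstanceAs (Finite (X ⊕ Y))
  rw [contractibleSpace_downTop_iff, contractibleSpace_downTop_iff, contractibleSpace_downTop_iff]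
  exact ⟨FenceContractible.of_sumLex, fun h => h.elim (·.sumLex_left) (·.sumLex_right)⟩
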